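/- Let k ≥ 1, let x_1, …, x_k be distinct real numbers, and let f : ℝ → ℝ be k times continuously differentiable. If f(x_j) = 0 for all j = 1, …, k, then there exists ξ ∈ [min_j x_j, max_j x_j] such that f′(x_1) = (f^{(k)}(ξ) / k!) · ∏_{j=2}^k (x_1 − x_j). -/

import Mathlib

/-!
Subtract from `f` the multiple `c · ∏ⱼ (X - xⱼ)` of the nodal polynomial that makes the
difference `g` satisfy `g'(x₁) = 0`. Then `g` vanishes at the `k` nodes, so Rolle's theorem
gives `k - 1` zeros of `g'` strictly between consecutive nodes; together with `x₁` these are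
`k` distinct zeros of `g'`, and iterating Rolle's theorem yields `ξ` with `g⁽ᵏ⁾(ξ) = 0`,
i.e. `f⁽ᵏ⁾(ξ) = c · k!`.
-/

open Finset Polynomial
open scoped Nat

theorem Polynomial.Monic.iterate_derivative_natDegree {R : Type*} [Semiring R] {p : R[X]}
    (hp : p.Monic) : derivative^[p.natDegree] p = C (p.natDegree ! : R) := by
  have hdeg : (derivative^[p.natDegree] p).natDegree = 0 :=
    Nat.le_zero.mp ((natDegree_iterate_derivative p _).trans_eq (Nat.sub_self _))
  rw [eq_C_of_natDegree_eq_zero hdeg, coeff_iterate_derivative, zero_add,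
    Nat.descFactorial_self, hp.coeff_natDegree, nsmul_one]

theorem Polynomial.iteratedDeriv_eval {𝕜 : Type*} [NontriviallyNormedField 𝕜] (p : 𝕜[X])
    (n : ℕ) :
    iteratedDeriv n (fun x => p.eval x) = fun x => (derivative^[n] p).eval x := by
  rw [iteratedDeriv_eq_iterate]
  induction n generalizing p with
  | zero => rfl
  | succ n ih =>
    rw [Function.iterate_succ_apply, Function.iterate_succ_apply, ← ih]
    congr 1
    ext
    exact p.deriv

theorem Lagrange.iterate_derivative_nodal {R : Type*} [CommRing R] [Nontrivial R] {ι : Type*}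
    (s : Finset ι) (v : ι → R) : derivative^[#s] (nodal s v) = C ((#s)! : R) := by
  simpa only [natDegree_nodal] using (nodal_monic (s := s) (v := v)).iterate_derivative_natDegree

section Rolle

variable {g : ℝ → ℝ} {I : Set ℝ} {s : Finset ℝ}

theorem exists_finset_deriv_eq_zero (hg : Differentiable ℝ g) (hI : I.OrdConnected)
    (hsI : ↑s ⊆ I) (hs : ∀ y ∈ s, g y = 0) :
    ∃ t : Finset ℝ, #s ≤ #t + 1 ∧ ↑t ⊆ I \ ↑s ∧ ∀ z ∈ t, deriv g z = 0 := by
  classical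
  -- One Rolle point for every pair of zeros, not only consecutive ones: the interleaving
  -- count only needs a point in each gap, and this avoids enumerating `s` in order.
  set pairs := (s ×ˢ s).filter fun p => p.1 < p.2
  have hRolle : ∀ p ∈ pairs, ∃ z ∈ Set.Ioo p.1 p.2, deriv g z = 0 := fun p hp => by
    obtain ⟨⟨h₁, h₂⟩, hlt⟩ := mem_filter.mp hp |>.imp_left mem_product.mp
    exact exists_deriv_eq_zero hlt hg.continuous.continuousOn (by rw [hs _ h₁, hs _ h₂])
  choose z hz hz₀ using hRolle
  set t := pairs.attach.image fun p => z p.1 p.2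
  have hzt : ∀ p (hp : p ∈ pairs), z p hp ∈ t := fun p hp =>
    mem_image_of_mem _ (mem_attach _ ⟨p, hp⟩)
  refine ⟨t \ s, card_le_sdiff_of_interleaved fun a ha b hb hab _ => ?_, ?_, ?_⟩
  · have hp : (a, b) ∈ pairs := mem_filter.mpr ⟨mem_product.mpr ⟨ha, hb⟩, hab⟩
    exact ⟨_, hzt _ hp, hz _ hp⟩
  · intro y hy
    obtain ⟨hyt, hys⟩ := mem_sdiff.mp hy
    obtain ⟨⟨p, hp⟩, -, rfl⟩ := mem_image.mp hyt
    obtain ⟨⟨h₁, h₂⟩, -⟩ := mem_filter.mp hp |>.imp_left mem_product.mp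
    exact ⟨hI.out (hsI h₁) (hsI h₂) (Set.Ioo_subset_Icc_self (hz p hp)), hys⟩
  · intro y hy
    obtain ⟨⟨p, hp⟩, -, rfl⟩ := mem_image.mp (mem_sdiff.mp hy).1
    exact hz₀ p hp

theorem exists_iteratedDeriv_eq_zero {n : ℕ} (hg : ContDiff ℝ n g) (hI : I.OrdConnected)
    (hsI : ↑s ⊆ I) (hcard : n < #s) (hs : ∀ y ∈ s, g y = 0) :
    ∃ ξ ∈ I, iteratedDeriv n g ξ = 0 := by
  induction n generalizing g s with
  | zero =>
    obtain ⟨a, ha⟩ := card_pos.mp hcard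
    exact ⟨a, hsI ha, by simpa using hs a ha⟩
  | succ n ih =>
    have hg' : ContDiff ℝ (n + 1) g := by exact_mod_cast hg
    obtain ⟨t, hst, htI, ht⟩ := exists_finset_deriv_eq_zero
      (hg'.differentiable (by simp)) hI hsI hs
    rw [iteratedDeriv_succ']
    exact ih (contDiff_succ_iff_deriv.mp hg').2.2 (htI.trans Set.sdiff_subset) (by omega) ht

theorem exists_iteratedDeriv_succ_eq_zero_of_deriv_eq_zero {n : ℕ} (hg : ContDiff ℝ (n + 1) g)
    (hI : I.OrdConnected) (hsI : ↑s ⊆ I) (hcard : n < #s) (hs : ∀ y ∈ s, g y = 0) {a : ℝ}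
    (ha : a ∈ s) (hga : deriv g a = 0) :
    ∃ ξ ∈ I, iteratedDeriv (n + 1) g ξ = 0 := by
  classical
  obtain ⟨t, hst, htI, ht⟩ :=
    exists_finset_deriv_eq_zero (hg.differentiable (by simp)) hI hsI hs
  have hat : a ∉ t := fun h => (htI h).2 ha
  rw [iteratedDeriv_succ']
  refine exists_iteratedDeriv_eq_zero (s := insert a t) (contDiff_succ_iff_deriv.mp hg).2.2 hI
    ?_ ?_ ?_
  · rw [coe_insert, Set.insert_subset_iff]
    exact ⟨hsI ha, htI.trans Set.sdiff_subset⟩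
  · rw [card_insert_of_notMem hat]
    omega
  · intro y hy
    rcases mem_insert.mp hy with rfl | hy
    exacts [hga, ht y hy]

end Rolle

theorem exists_deriv_eq_iteratedDeriv_div_factorial_mul_prod {ι : Type*} [DecidableEq ι]
    {s : Finset ι} {v : ι → ℝ} (hv : Set.InjOn v s) {f : ℝ → ℝ} (hf : ContDiff ℝ #s f)
    (hzero : ∀ j ∈ s, f (v j) = 0) {I : Set ℝ} (hI : I.OrdConnected)
    (hvI : ∀ j ∈ s, v j ∈ I) {i : ι} (hi : i ∈ s) :
    ∃ ξ ∈ I,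
      deriv f (v i) = iteratedDeriv #s f ξ / (#s)! * ∏ j ∈ s.erase i, (v i - v j) := by
  obtain ⟨n, hn⟩ : ∃ n, #s = n + 1 := Nat.exists_eq_succ_of_ne_zero (card_ne_zero_of_mem hi)
  have hprod_ne : ∏ j ∈ s.erase i, (v i - v j) ≠ 0 := by
    rw [← Lagrange.eval_nodal]
    exact Lagrange.eval_nodal_not_at_node fun j hj =>
      hv.ne hi (mem_of_mem_erase hj) (ne_of_mem_erase hj).symm
  set c := deriv f (v i) / ∏ j ∈ s.erase i, (v i - v j)
  set g := f - fun t => (C c * Lagrange.nodal s v).eval t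
  have hpoly : ContDiff ℝ #s fun t => (C c * Lagrange.nodal s v).eval t :=
    (C c * Lagrange.nodal s v).contDiff_aeval _
  have hg_deriv : deriv g (v i) = 0 := by
    rw [deriv_sub (hf.differentiable (by simp [hn]) _) (C c * _).differentiableAt,
      Polynomial.deriv, derivative_C_mul, eval_mul, eval_C,
      Lagrange.eval_nodal_derivative_eval_node_eq hi, Lagrange.eval_nodal,
      div_mul_cancel₀ _ hprod_ne, sub_self]
  have hg_iteratedDeriv (ξ : ℝ) :
      iteratedDeriv #s g ξ = iteratedDeriv #s f ξ - c * (#s)! := by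
    rw [iteratedDeriv_sub hf.contDiffAt hpoly.contDiffAt, Polynomial.iteratedDeriv_eval,
      iterate_derivative_C_mul, Lagrange.iterate_derivative_nodal]
    simp only [eval_mul, eval_C]
  have hg_nodes : ∀ y ∈ s.image v, g y = 0 := by
    intro y hy
    obtain ⟨j, hj, rfl⟩ := mem_image.mp hy
    change f (v j) - (C c * Lagrange.nodal s v).eval (v j) = 0
    rw [hzero j hj, eval_mul, Lagrange.eval_nodal_at_node hj, mul_zero, sub_zero]
  have hg : ContDiff ℝ (n + 1) g := by exact_mod_cast hn ▸ hf.sub hpoly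
  have hnodes_card : n < #(s.image v) := by
    rw [card_image_of_injOn hv, hn]
    exact n.lt_succ_self
  obtain ⟨ξ, hξI, hξ⟩ := exists_iteratedDeriv_succ_eq_zero_of_deriv_eq_zero hg hI
    (by simpa [Set.subset_def] using hvI) hnodes_card hg_nodes (mem_image_of_mem v hi) hg_deriv
  rw [← hn, hg_iteratedDeriv, sub_eq_zero] at hξ
  refine ⟨ξ, hξI, ?_⟩
  rw [hξ, mul_div_cancel_right₀ _ (by positivity)]
  exact (div_mul_cancel₀ _ hprod_ne).symm

theorem statement9 (k : ℕ) (hk : 1 ≤ k) (x : Fin k → ℝ) (hx : Function.Injective x)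
    (f : ℝ → ℝ) (hf : ContDiff ℝ k f) (hzero : ∀ j, f (x j) = 0) :
    ∃ ξ : ℝ, (⨅ j, x j) ≤ ξ ∧ ξ ≤ (⨆ j, x j) ∧
      deriv f (x ⟨0, hk⟩) =
        iteratedDeriv k f ξ / (Nat.factorial k) *
          ∏ j ∈ Finset.univ.erase (⟨0, hk⟩ : Fin k), (x ⟨0, hk⟩ - x j) := by
  obtain ⟨ξ, ⟨hξ_ge, hξ_le⟩, hξ⟩ := exists_deriv_eq_iteratedDeriv_div_factorial_mul_prod
    hx.injOn (by rwa [card_fin]) (fun j _ => hzero j) Set.ordConnected_Icc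
    (fun j _ => ⟨ciInf_le (Set.finite_range x).bddBelow j,
      le_ciSup (Set.finite_range x).bddAbove j⟩)
    (mem_univ ⟨0, hk⟩)
  rw [card_fin] at hξ
  exact ⟨ξ, hξ_ge, hξ_le, hξ⟩
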